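/- For every real number $\lambda > 0$ and every decomposition $\lambda = \mu + \nu$ with $\mu > 0$ and $\nu > -1$, and for all real numbers $R > 0$ and $m$ with $|m| \le R$, one has $\left(1 - \frac{m^2}{R^2}\right)^{\lambda} = c_{\lambda}\, R^{-2\lambda} \int_{|m|}^{R} (R^2 - t^2)^{\mu - 1}\, t^{2\nu + 1} \left(1 - \frac{m^2}{t^2}\right)^{\nu} dt$, where $c_{\lambda} = \frac{2\,\Gamma(\mu+\nu+1)}{\Gamma(\nu+1)\,\Gamma(\mu)}$. -/

import Mathlib

/-!
Substituting `u = t²` turns the integral into `½ ∫_{m²}^{R²} (u - m²)^ν (R² - u)^(μ-1) du`,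
and an affine change of variables reduces this to `(R² - m²)^(μ+ν) B(ν+1, μ) / 2`.
Since `B(ν+1, μ) = Γ(ν+1) Γ(μ) / Γ(μ+ν+1)`, the constant `c_λ` is exactly `2 / B(ν+1, μ)`.
-/

open MeasureTheory Set ProbabilityTheory

theorem integral_rpow_mul_one_sub_rpow {p q : ℝ} (hp : 0 < p) (hq : 0 < q) :
    ∫ x in (0 : ℝ)..1, x ^ (p - 1) * (1 - x) ^ (q - 1) = beta p q := by
  have hofReal : (∫ x in (0 : ℝ)..1, (x : ℂ) ^ ((p : ℂ) - 1) * (1 - (x : ℂ)) ^ ((q : ℂ) - 1)) =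
      ((∫ x in (0 : ℝ)..1, x ^ (p - 1) * (1 - x) ^ (q - 1) : ℝ) : ℂ) := by
    rw [← intervalIntegral.integral_ofReal]
    refine intervalIntegral.integral_congr fun x hx => ?_
    rw [uIcc_of_le zero_le_one] at hx
    push_cast
    rw [Complex.ofReal_cpow hx.1, Complex.ofReal_cpow (sub_nonneg.mpr hx.2)]
    push_cast
    rfl
  rw [beta_eq_betaIntegralReal p q hp hq, Complex.betaIntegral, hofReal, Complex.ofReal_re]

theorem integral_sub_rpow_mul_sub_rpow {a b p q : ℝ} (hab : a < b) (hp : 0 < p) (hq : 0 < q) :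
    ∫ u in a..b, (u - a) ^ (p - 1) * (b - u) ^ (q - 1) = (b - a) ^ (p + q - 1) * beta p q := by
  have hba : 0 < b - a := sub_pos.mpr hab
  have hscale := intervalIntegral.mul_integral_comp_mul_add
    (a := 0) (b := 1) (f := fun u => (u - a) ^ (p - 1) * (b - u) ^ (q - 1)) (b - a) a
  rw [mul_zero, zero_add, mul_one, sub_add_cancel] at hscale
  have hfactor : ∀ x ∈ uIcc (0 : ℝ) 1,
      ((b - a) * x + a - a) ^ (p - 1) * (b - ((b - a) * x + a)) ^ (q - 1) =
        (b - a) ^ (p - 1) * (b - a) ^ (q - 1) * (x ^ (p - 1) * (1 - x) ^ (q - 1)) := by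
    intro x hx
    rw [uIcc_of_le zero_le_one] at hx
    rw [show (b - a) * x + a - a = (b - a) * x by ring,
      show b - ((b - a) * x + a) = (b - a) * (1 - x) by ring,
      Real.mul_rpow hba.le hx.1, Real.mul_rpow hba.le (sub_nonneg.mpr hx.2)]
    ring
  have hexp : (b - a) ^ (p + q - 1) = (b - a) * ((b - a) ^ (p - 1) * (b - a) ^ (q - 1)) := by
    rw [← Real.rpow_add hba, mul_comm, ← Real.rpow_add_one hba.ne']
    ring_nf
  rw [← hscale, intervalIntegral.integral_congr hfactor, intervalIntegral.integral_const_mul,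
    integral_rpow_mul_one_sub_rpow hp hq, hexp]
  ring

theorem integral_comp_sq_mul {a b : ℝ} (ha : 0 ≤ a) (hb : 0 ≤ b) (g : ℝ → ℝ) :
    ∫ t in a..b, g (t ^ 2) * (2 * t) = ∫ u in a ^ 2..b ^ 2, g u :=
  intervalIntegral.integral_comp_mul_deriv_of_deriv_nonneg (f := fun t => t ^ 2)
    (continuous_pow 2).continuousOn
    (fun t _ => by simpa using hasDerivAt_pow 2 t)
    (fun t ht => by linarith [le_min ha hb, ht.1])

theorem integral_subordination_kernel {mu nu R m : ℝ} (hmu : 0 < mu) (hnu : -1 < nu)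
    (hm : |m| < R) :
    ∫ t in (|m|)..R, (R ^ 2 - t ^ 2) ^ (mu - 1) * t ^ (2 * nu + 1) * (1 - m ^ 2 / t ^ 2) ^ nu =
      (R ^ 2 - m ^ 2) ^ (mu + nu) * beta (nu + 1) mu / 2 := by
  set g : ℝ → ℝ := fun u => (u - m ^ 2) ^ (nu + 1 - 1) * (R ^ 2 - u) ^ (mu - 1)
  have hpointwise : ∀ t ∈ uIoc (|m|) R,
      (R ^ 2 - t ^ 2) ^ (mu - 1) * t ^ (2 * nu + 1) * (1 - m ^ 2 / t ^ 2) ^ nu =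
        g (t ^ 2) * (2 * t) / 2 := by
    intro t ht
    rw [uIoc_of_le hm.le] at ht
    have ht0 : 0 < t := (abs_nonneg m).trans_lt ht.1
    have hmt : m ^ 2 ≤ t ^ 2 := sq_le_sq' (abs_le.mp ht.1.le).1 (abs_le.mp ht.1.le).2
    rw [one_sub_div (pow_pos ht0 2).ne', Real.div_rpow (sub_nonneg.mpr hmt) (sq_nonneg t),
      Real.rpow_add_one ht0.ne', Real.rpow_mul ht0.le, Real.rpow_two]
    simp only [g, add_sub_cancel_right]
    field_simp [(Real.rpow_pos_of_pos (pow_pos ht0 2) nu).ne']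
  have hm2 : m ^ 2 < R ^ 2 := sq_lt_sq' (abs_lt.mp hm).1 (abs_lt.mp hm).2
  rw [intervalIntegral.integral_congr_ae (Filter.Eventually.of_forall hpointwise),
    intervalIntegral.integral_div, integral_comp_sq_mul (abs_nonneg m) ((abs_nonneg m).trans hm.le),
    sq_abs, integral_sub_rpow_mul_sub_rpow hm2 (by linarith) hmu]
  ring_nf

theorem one_sub_sq_div_sq_rpow {R m : ℝ} (hR : 0 < R) (hm : |m| ≤ R) (lam : ℝ) :
    (1 - m ^ 2 / R ^ 2) ^ lam = R ^ (-2 * lam) * (R ^ 2 - m ^ 2) ^ lam := by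
  have hm2 : m ^ 2 ≤ R ^ 2 := sq_le_sq' (abs_le.mp hm).1 (abs_le.mp hm).2
  rw [one_sub_div (pow_pos hR 2).ne', Real.div_rpow (sub_nonneg.mpr hm2) (sq_nonneg R),
    show -2 * lam = ((2 : ℕ) : ℝ) * -lam by push_cast; ring, Real.rpow_natCast_mul hR.le,
    Real.rpow_neg (sq_nonneg R), div_eq_mul_inv, mul_comm]

/-- Stein--Weiss subordination identity. -/
theorem stein_weiss_identity (lam mu nu R m : ℝ)
    (hlam : 0 < lam) (hdecomp : lam = mu + nu) (hmu : 0 < mu) (hnu : -1 < nu)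
    (hR : 0 < R) (hm : |m| ≤ R) :
    (1 - m ^ 2 / R ^ 2) ^ lam =
      (2 * Real.Gamma (mu + nu + 1) / (Real.Gamma (nu + 1) * Real.Gamma mu)) *
        R ^ (-2 * lam) *
        ∫ t in (|m|)..R,
          (R ^ 2 - t ^ 2) ^ (mu - 1) * t ^ (2 * nu + 1) * (1 - m ^ 2 / t ^ 2) ^ nu := by
  rcases hm.eq_or_lt with hmR | hmR
  · have hm2 : m ^ 2 = R ^ 2 := by rw [← sq_abs, hmR]
    rw [hm2, div_self (pow_pos hR 2).ne', sub_self, Real.zero_rpow hlam.ne', hmR,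
      intervalIntegral.integral_same, mul_zero]
  · have hGamma_nu : Real.Gamma (nu + 1) ≠ 0 := (Real.Gamma_pos_of_pos (by linarith)).ne'
    have hGamma_mu : Real.Gamma mu ≠ 0 := (Real.Gamma_pos_of_pos hmu).ne'
    have hGamma_sum : Real.Gamma (nu + 1 + mu) ≠ 0 := (Real.Gamma_pos_of_pos (by linarith)).ne'
    rw [integral_subordination_kernel hmu hnu hmR, one_sub_sq_div_sq_rpow hR hm, hdecomp, beta,
      show mu + nu + 1 = nu + 1 + mu by ring]
    field_simp
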